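/- Let K ⊂ ℝ² be a nondegenerate triangle, and for each cyclic pair (i,j) let Φ_ij = Φ⁰_ij + α_ij Φ^B_ij + β_ij Φ^B_jk + γ_ij Φ^B_ki be the modified Nédélec function whose normal components vanish at all three edge midpoints. Then the six functions Ψ ∈ {Φ_12, Φ_23, Φ_31, Φ^B_12, Φ^B_23, Φ^B_31} satisfy (Ψ_a, Ψ_b)_{h,K} = 0 whenever a ≠ b and (Ψ_a, Ψ_a)_{h,K} > 0 for every a, where (u,v)_{h,K} = (|K|/3) Σ_{i=1}^{3} u(m_i) · v(m_i). In other words, the local mass matrix of N0⁺(K) in this basis, computed with the edge-midpoint quadrature, is diagonal with positive diagonal entries. -/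

import Mathlib

/-!
At the midpoint `m l` of the edge opposite `p l` one has `λ_l = 0` and `λ_i = 1/2` for
`i ≠ l`. Hence `Φ^B_ij` vanishes at every midpoint except `m_k`, and at the other two
midpoints `Φ_ij` is a multiple of the normal `∇λ_l`, which the normal condition kills.
So each of the six functions lives, for the quadrature, at the single midpoint `m_k`;
two of them sharing `m_k` are `Φ_ij` and `Φ^B_ij ∥ ∇λ_k`, orthogonal by the normal
condition again. Positivity follows since `Φ_ij(m_k)` has tangential component `-1`
along `p_i - p_j`, and `|K| > 0`. Here `Phi i` stands for `Φ_{i,i+1}`, so `k = i + 2`.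
-/

open MeasureTheory

noncomputable def dot (u v : ℝ × ℝ) : ℝ := u.1 * v.1 + u.2 * v.2

@[simp] theorem dot_zero_left (v : ℝ × ℝ) : dot 0 v = 0 := by simp [dot]

@[simp] theorem dot_zero_right (v : ℝ × ℝ) : dot v 0 = 0 := by simp [dot]

theorem dot_comm (u v : ℝ × ℝ) : dot u v = dot v u := by
  simp only [dot]; ring

theorem dot_smul_left (c : ℝ) (u v : ℝ × ℝ) : dot (c • u) v = c * dot u v := by
  simp only [dot, Prod.smul_fst, Prod.smul_snd, smul_eq_mul]; ring

theorem dot_add_left (u v w : ℝ × ℝ) : dot (u + v) w = dot u w + dot v w := by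
  simp only [dot, Prod.fst_add, Prod.snd_add]; ring

theorem dot_sub_left (u v w : ℝ × ℝ) : dot (u - v) w = dot u w - dot v w := by
  simp only [dot, Prod.fst_sub, Prod.snd_sub]; ring

theorem dot_sub_right (u v w : ℝ × ℝ) : dot u (v - w) = dot u v - dot u w := by
  simp only [dot, Prod.fst_sub, Prod.snd_sub]; ring

theorem dot_self_nonneg (v : ℝ × ℝ) : 0 ≤ dot v v :=
  add_nonneg (mul_self_nonneg _) (mul_self_nonneg _)

theorem dot_self_pos {v : ℝ × ℝ} (hv : v ≠ 0) : 0 < dot v v := by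
  refine (dot_self_nonneg v).lt_of_ne fun h => hv ?_
  obtain ⟨h1, h2⟩ := mul_self_add_mul_self_eq_zero.mp h.symm
  exact Prod.ext h1 h2

theorem eq_zero_of_eq_smul_of_dot_eq_zero {v w : ℝ × ℝ} {c : ℝ} (hw : w ≠ 0) (hv : v = c • w)
    (h : dot w v = 0) : v = 0 := by
  rw [hv, dot_comm, dot_smul_left, mul_eq_zero] at h
  rw [hv, h.resolve_right (dot_self_pos hw).ne', zero_smul]

theorem sum_dot_eq_zero_of_support_ne {ι : Type*} [Fintype ι] {F G : ι → ℝ × ℝ} {a b : ι}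
    (hab : a ≠ b) (hF : ∀ l, l ≠ a → F l = 0) (hG : ∀ l, l ≠ b → G l = 0) :
    ∑ l, dot (F l) (G l) = 0 := by
  refine Finset.sum_eq_zero fun l _ => ?_
  by_cases hl : l = a
  · rw [hG l (hl ▸ hab), dot_zero_right]
  · rw [hF l hl, dot_zero_left]

theorem sum_dot_self_pos {ι : Type*} [Fintype ι] {F : ι → ℝ × ℝ} {a : ι} (ha : F a ≠ 0) :
    0 < ∑ l, dot (F l) (F l) :=
  Finset.sum_pos' (fun l _ => dot_self_nonneg (F l)) ⟨a, Finset.mem_univ a, dot_self_pos ha⟩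

theorem dot_sub_eq_of_affine {f : ℝ × ℝ → ℝ} {g : ℝ × ℝ} {c : ℝ} (hf : ∀ x, f x = dot g x + c)
    (x y : ℝ × ℝ) : dot g (x - y) = f x - f y := by
  rw [hf, hf, dot_sub_right]; ring

theorem apply_midpoint_of_affine {f : ℝ × ℝ → ℝ} {g : ℝ × ℝ} {c : ℝ} (hf : ∀ x, f x = dot g x + c)
    (x y : ℝ × ℝ) : f (midpoint ℝ x y) = (f x + f y) / 2 := by
  simp only [hf, midpoint_eq_smul_add, invOf_eq_inv, dot, Prod.smul_fst, Prod.smul_snd,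
    Prod.fst_add, Prod.snd_add, smul_eq_mul]
  ring

theorem measure_convexHull_pos {ι E : Type*} [Fintype ι] [NormedAddCommGroup E]
    [NormedSpace ℝ E] [FiniteDimensional ℝ E] [MeasurableSpace E] [BorelSpace E]
    (μ : Measure E) [μ.IsAddHaarMeasure] {p : ι → E} (hp : AffineIndependent ℝ p)
    (hcard : Fintype.card ι = Module.finrank ℝ E + 1) :
    0 < (μ (convexHull ℝ (Set.range p))).toReal := by
  have hspan : affineSpan ℝ (convexHull ℝ (Set.range p)) = ⊤ := by
    rw [affineSpan_convexHull]
    exact hp.affineSpan_eq_top_iff_card_eq_finrank_add_one.mpr hcard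
  have hint :=
    (convex_convexHull ℝ (Set.range p)).interior_nonempty_iff_affineSpan_eq_top.mpr hspan
  exact ENNReal.toReal_pos (μ.measure_pos_of_nonempty_interior hint).ne'
    ((Set.finite_range p).isCompact_convexHull (𝕜 := ℝ)).measure_lt_top.ne

section Nedelec

variable {p m : Fin 3 → ℝ × ℝ} {lam : Fin 3 → ℝ × ℝ → ℝ} {g : Fin 3 → ℝ × ℝ} {cc : Fin 3 → ℝ}

theorem dot_grad_sub_vertex (hlam : ∀ i x, lam i x = dot (g i) x + cc i)
    (hdelta : ∀ i j, lam i (p j) = if i = j then 1 else 0) (k i j : Fin 3) :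
    dot (g k) (p i - p j) = (if k = i then 1 else 0) - (if k = j then 1 else 0) := by
  rw [dot_sub_eq_of_affine (hlam k), hdelta, hdelta]

theorem grad_ne_zero (hlam : ∀ i x, lam i x = dot (g i) x + cc i)
    (hdelta : ∀ i j, lam i (p j) = if i = j then 1 else 0) (i : Fin 3) : g i ≠ 0 := by
  intro hg
  have h := dot_grad_sub_vertex hlam hdelta i i (i + 1)
  rw [hg] at h
  fin_cases i <;> simp at h

theorem lam_midpoint (hm : ∀ i : Fin 3, m i = midpoint ℝ (p (i + 1)) (p (i + 2)))
    (hlam : ∀ i x, lam i x = dot (g i) x + cc i)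
    (hdelta : ∀ i j, lam i (p j) = if i = j then 1 else 0) (i l : Fin 3) :
    lam i (m l) = if i = l then 0 else 1 / 2 := by
  rw [hm, apply_midpoint_of_affine (hlam i), hdelta, hdelta]
  fin_cases i <;> fin_cases l <;> simp +decide

variable {Phi0 PhiB Phi : Fin 3 → ℝ × ℝ → ℝ × ℝ} {al be ga : Fin 3 → ℝ}

theorem PhiB_midpoint (hm : ∀ i : Fin 3, m i = midpoint ℝ (p (i + 1)) (p (i + 2)))
    (hlam : ∀ i x, lam i x = dot (g i) x + cc i)
    (hdelta : ∀ i j, lam i (p j) = if i = j then 1 else 0)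
    (hPhiB : ∀ i x, PhiB i x = (lam i x * lam (i + 1) x) • g (i + 2)) (i l : Fin 3) :
    PhiB i (m l) = if l = i + 2 then (1 / 4 : ℝ) • g (i + 2) else 0 := by
  rw [hPhiB, lam_midpoint hm hlam hdelta, lam_midpoint hm hlam hdelta]
  fin_cases i <;> fin_cases l <;> simp +decide <;> norm_num

theorem PhiB_midpoint_eq_zero (hm : ∀ i : Fin 3, m i = midpoint ℝ (p (i + 1)) (p (i + 2)))
    (hlam : ∀ i x, lam i x = dot (g i) x + cc i)
    (hdelta : ∀ i j, lam i (p j) = if i = j then 1 else 0)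
    (hPhiB : ∀ i x, PhiB i x = (lam i x * lam (i + 1) x) • g (i + 2)) (i l : Fin 3)
    (hl : l ≠ i + 2) : PhiB i (m l) = 0 := by
  rw [PhiB_midpoint hm hlam hdelta hPhiB, if_neg hl]

theorem PhiB_midpoint_add_two_ne_zero
    (hm : ∀ i : Fin 3, m i = midpoint ℝ (p (i + 1)) (p (i + 2)))
    (hlam : ∀ i x, lam i x = dot (g i) x + cc i)
    (hdelta : ∀ i j, lam i (p j) = if i = j then 1 else 0)
    (hPhiB : ∀ i x, PhiB i x = (lam i x * lam (i + 1) x) • g (i + 2)) (i : Fin 3) :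
    PhiB i (m (i + 2)) ≠ 0 := by
  rw [PhiB_midpoint hm hlam hdelta hPhiB, if_pos rfl]
  exact smul_ne_zero (by norm_num) (grad_ne_zero hlam hdelta _)

theorem Phi_midpoint_self (hm : ∀ i : Fin 3, m i = midpoint ℝ (p (i + 1)) (p (i + 2)))
    (hlam : ∀ i x, lam i x = dot (g i) x + cc i)
    (hdelta : ∀ i j, lam i (p j) = if i = j then 1 else 0)
    (hPhi0 : ∀ i x, Phi0 i x = lam i x • g (i + 1) - lam (i + 1) x • g i)
    (hPhiB : ∀ i x, PhiB i x = (lam i x * lam (i + 1) x) • g (i + 2))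
    (hPhi : ∀ i x, Phi i x =
      Phi0 i x + al i • PhiB i x + be i • PhiB (i + 1) x + ga i • PhiB (i + 2) x) (i : Fin 3) :
    Phi i (m i) = (be i / 4 - 1 / 2) • g i := by
  simp only [hPhi, hPhi0, PhiB_midpoint hm hlam hdelta hPhiB, lam_midpoint hm hlam hdelta]
  fin_cases i <;> simp +decide <;> module

theorem Phi_midpoint_succ (hm : ∀ i : Fin 3, m i = midpoint ℝ (p (i + 1)) (p (i + 2)))
    (hlam : ∀ i x, lam i x = dot (g i) x + cc i)
    (hdelta : ∀ i j, lam i (p j) = if i = j then 1 else 0)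
    (hPhi0 : ∀ i x, Phi0 i x = lam i x • g (i + 1) - lam (i + 1) x • g i)
    (hPhiB : ∀ i x, PhiB i x = (lam i x * lam (i + 1) x) • g (i + 2))
    (hPhi : ∀ i x, Phi i x =
      Phi0 i x + al i • PhiB i x + be i • PhiB (i + 1) x + ga i • PhiB (i + 2) x) (i : Fin 3) :
    Phi i (m (i + 1)) = (1 / 2 + ga i / 4) • g (i + 1) := by
  simp only [hPhi, hPhi0, PhiB_midpoint hm hlam hdelta hPhiB, lam_midpoint hm hlam hdelta]
  fin_cases i <;> simp +decide <;> module

theorem Phi_midpoint_add_two (hm : ∀ i : Fin 3, m i = midpoint ℝ (p (i + 1)) (p (i + 2)))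
    (hlam : ∀ i x, lam i x = dot (g i) x + cc i)
    (hdelta : ∀ i j, lam i (p j) = if i = j then 1 else 0)
    (hPhi0 : ∀ i x, Phi0 i x = lam i x • g (i + 1) - lam (i + 1) x • g i)
    (hPhiB : ∀ i x, PhiB i x = (lam i x * lam (i + 1) x) • g (i + 2))
    (hPhi : ∀ i x, Phi i x =
      Phi0 i x + al i • PhiB i x + be i • PhiB (i + 1) x + ga i • PhiB (i + 2) x) (i : Fin 3) :
    Phi i (m (i + 2)) = (1 / 2 : ℝ) • (g (i + 1) - g i) + (al i / 4) • g (i + 2) := by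
  simp only [hPhi, hPhi0, PhiB_midpoint hm hlam hdelta hPhiB, lam_midpoint hm hlam hdelta]
  fin_cases i <;> simp +decide <;> module

theorem Phi_midpoint_eq_zero (hm : ∀ i : Fin 3, m i = midpoint ℝ (p (i + 1)) (p (i + 2)))
    (hlam : ∀ i x, lam i x = dot (g i) x + cc i)
    (hdelta : ∀ i j, lam i (p j) = if i = j then 1 else 0)
    (hPhi0 : ∀ i x, Phi0 i x = lam i x • g (i + 1) - lam (i + 1) x • g i)
    (hPhiB : ∀ i x, PhiB i x = (lam i x * lam (i + 1) x) • g (i + 2))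
    (hPhi : ∀ i x, Phi i x =
      Phi0 i x + al i • PhiB i x + be i • PhiB (i + 1) x + ga i • PhiB (i + 2) x)
    (hnormal : ∀ i l : Fin 3, dot (g l) (Phi i (m l)) = 0) (i l : Fin 3) (hl : l ≠ i + 2) :
    Phi i (m l) = 0 := by
  obtain rfl | rfl : l = i ∨ l = i + 1 := by fin_cases i <;> fin_cases l <;> simp_all
  · exact eq_zero_of_eq_smul_of_dot_eq_zero (grad_ne_zero hlam hdelta _)
      (Phi_midpoint_self hm hlam hdelta hPhi0 hPhiB hPhi l) (hnormal l l)
  · exact eq_zero_of_eq_smul_of_dot_eq_zero (grad_ne_zero hlam hdelta _)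
      (Phi_midpoint_succ hm hlam hdelta hPhi0 hPhiB hPhi i) (hnormal i (i + 1))

theorem dot_Phi_midpoint_edge (hm : ∀ i : Fin 3, m i = midpoint ℝ (p (i + 1)) (p (i + 2)))
    (hlam : ∀ i x, lam i x = dot (g i) x + cc i)
    (hdelta : ∀ i j, lam i (p j) = if i = j then 1 else 0)
    (hPhi0 : ∀ i x, Phi0 i x = lam i x • g (i + 1) - lam (i + 1) x • g i)
    (hPhiB : ∀ i x, PhiB i x = (lam i x * lam (i + 1) x) • g (i + 2))
    (hPhi : ∀ i x, Phi i x =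
      Phi0 i x + al i • PhiB i x + be i • PhiB (i + 1) x + ga i • PhiB (i + 2) x) (i : Fin 3) :
    dot (Phi i (m (i + 2))) (p i - p (i + 1)) = -1 := by
  rw [Phi_midpoint_add_two hm hlam hdelta hPhi0 hPhiB hPhi, dot_add_left, dot_smul_left,
    dot_smul_left, dot_sub_left]
  simp only [dot_grad_sub_vertex hlam hdelta]
  fin_cases i <;> simp +decide <;> norm_num

theorem Phi_midpoint_add_two_ne_zero
    (hm : ∀ i : Fin 3, m i = midpoint ℝ (p (i + 1)) (p (i + 2)))
    (hlam : ∀ i x, lam i x = dot (g i) x + cc i)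
    (hdelta : ∀ i j, lam i (p j) = if i = j then 1 else 0)
    (hPhi0 : ∀ i x, Phi0 i x = lam i x • g (i + 1) - lam (i + 1) x • g i)
    (hPhiB : ∀ i x, PhiB i x = (lam i x * lam (i + 1) x) • g (i + 2))
    (hPhi : ∀ i x, Phi i x =
      Phi0 i x + al i • PhiB i x + be i • PhiB (i + 1) x + ga i • PhiB (i + 2) x) (i : Fin 3) :
    Phi i (m (i + 2)) ≠ 0 := by
  intro h
  have h_edge := dot_Phi_midpoint_edge hm hlam hdelta hPhi0 hPhiB hPhi i
  rw [h, dot_zero_left] at h_edge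
  norm_num at h_edge

theorem dot_Phi_PhiB_midpoint (hm : ∀ i : Fin 3, m i = midpoint ℝ (p (i + 1)) (p (i + 2)))
    (hlam : ∀ i x, lam i x = dot (g i) x + cc i)
    (hdelta : ∀ i j, lam i (p j) = if i = j then 1 else 0)
    (hPhiB : ∀ i x, PhiB i x = (lam i x * lam (i + 1) x) • g (i + 2))
    (hnormal : ∀ i l : Fin 3, dot (g l) (Phi i (m l)) = 0) (i j l : Fin 3) :
    dot (Phi i (m l)) (PhiB j (m l)) = 0 := by
  rw [PhiB_midpoint hm hlam hdelta hPhiB]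
  split_ifs with hl
  · rw [dot_comm, dot_smul_left, ← hl, hnormal, mul_zero]
  · exact dot_zero_right _

end Nedelec

/-- With the modified Nédélec functions
`Φ_ij = Φ⁰_ij + α_ij Φ^B_ij + β_ij Φ^B_jk + γ_ij Φ^B_ki` (whose normal components
vanish at all three edge midpoints), the six basis functions
`{Φ_12, Φ_23, Φ_31, Φ^B_12, Φ^B_23, Φ^B_31}` are pairwise orthogonal with positive
diagonal entries for the quadrature form `(u,v)_{h,K} = (|K|/3) Σ_l u(m_l) ⬝ v(m_l)`:
the local mass matrix is diagonal with positive diagonal. -/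
theorem stmt_11
    (p : Fin 3 → ℝ × ℝ) (hp : AffineIndependent ℝ p)
    (K : Set (ℝ × ℝ)) (hK : K = convexHull ℝ (Set.range p))
    (m : Fin 3 → ℝ × ℝ) (hm : ∀ i : Fin 3, m i = midpoint ℝ (p (i + 1)) (p (i + 2)))
    (lam : Fin 3 → ℝ × ℝ → ℝ) (g : Fin 3 → ℝ × ℝ) (cc : Fin 3 → ℝ)
    (hlam : ∀ i x, lam i x = dot (g i) x + cc i)
    (hdelta : ∀ i j, lam i (p j) = if i = j then 1 else 0)
    (Phi0 PhiB : Fin 3 → ℝ × ℝ → ℝ × ℝ)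
    (hPhi0 : ∀ i x, Phi0 i x = lam i x • g (i + 1) - lam (i + 1) x • g i)
    (hPhiB : ∀ i x, PhiB i x = (lam i x * lam (i + 1) x) • g (i + 2))
    (al be ga : Fin 3 → ℝ) (Phi : Fin 3 → ℝ × ℝ → ℝ × ℝ)
    (hPhi : ∀ i x, Phi i x =
      Phi0 i x + al i • PhiB i x + be i • PhiB (i + 1) x + ga i • PhiB (i + 2) x)
    (hnormal : ∀ i l : Fin 3, dot (g l) (Phi i (m l)) = 0) :
    ∀ s t : Fin 3 ⊕ Fin 3,
      (s ≠ t →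
        ((volume K).toReal / 3) *
          ∑ l : Fin 3, dot (Sum.elim Phi PhiB s (m l)) (Sum.elim Phi PhiB t (m l)) = 0) ∧
      0 < ((volume K).toReal / 3) *
          ∑ l : Fin 3, dot (Sum.elim Phi PhiB s (m l)) (Sum.elim Phi PhiB s (m l)) := by
  have hPhi_supp := Phi_midpoint_eq_zero hm hlam hdelta hPhi0 hPhiB hPhi hnormal
  have hPhiB_supp := PhiB_midpoint_eq_zero hm hlam hdelta hPhiB
  have hcross := dot_Phi_PhiB_midpoint hm hlam hdelta hPhiB hnormal
  have hK_pos : 0 < (volume K).toReal / 3 := by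
    rw [hK]
    exact div_pos (measure_convexHull_pos volume hp (by simp)) three_pos
  have hshift : ∀ i j : Fin 3, i ≠ j → i + 2 ≠ j + 2 := fun i j hij h => hij (add_right_cancel h)
  refine fun s t => ⟨fun hst => mul_eq_zero_of_right _ ?_, mul_pos hK_pos ?_⟩
  · rcases s with i | i <;> rcases t with j | j
    · exact sum_dot_eq_zero_of_support_ne (hshift i j (by simpa using hst))
        (hPhi_supp i) (hPhi_supp j)
    · exact Finset.sum_eq_zero fun l _ => hcross i j l
    · exact Finset.sum_eq_zero fun l _ => (dot_comm _ _).trans (hcross j i l)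
    · exact sum_dot_eq_zero_of_support_ne (hshift i j (by simpa using hst))
        (hPhiB_supp i) (hPhiB_supp j)
  · rcases s with i | i
    · exact sum_dot_self_pos (Phi_midpoint_add_two_ne_zero hm hlam hdelta hPhi0 hPhiB hPhi i)
    · exact sum_dot_self_pos (PhiB_midpoint_add_two_ne_zero hm hlam hdelta hPhiB i)
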